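/- Let u, t be positive integers and let a1, a2, a3, b be integers with a1·a2·a3 a unit of Z_{ut}. Let c be a coloring of Z_{ut} with no rainbow solution to eq(a1,a2,a3,b), and for each i with 0 ≤ i ≤ u-1 let P_i = { c(z) : z ∈ Z_{ut}, z ≡ i (mod u) } denote the palette of the residue class i modulo u. If |P_0| ≥ |P_i| for all 0 ≤ i ≤ u-1, then |P_i \ P_0| ≤ 1 for all 0 ≤ i ≤ u-1. -/

import Mathlib

/-!
Write `π` for reduction modulo `u` and `P i` for the palette of the class `i`. As the coefficients
are units, any two coordinates of a solution may be prescribed, and the third one, as well as its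
class, is then determined. Suppose two colours `x ≠ y` of `P i` lie outside `P 0`, and let `j` be
the class with `a₁ j + a₂ i = b` modulo `u`. Looking at solutions with classes `(j, i, 0)`, none of
which is rainbow, shows first `P j ⊆ P 0` (with both `x` and `y`), then `P 0 ⊆ P j` (with `x`),
and finally that of any two distinct colours of `P 0 = P j` one lies in `P i`. Hence
`|P 0 \ P i| ≤ 1 < |P i \ P 0|`, that is, `|P 0| < |P i|`.
-/

section Palette

variable {R S α : Type*} [CommRing R] [CommRing S]

def palette (π : R →+* S) (c : R → α) (i : S) : Set α := c '' (π ⁻¹' {i})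

instance [Finite R] (π : R →+* S) (c : R → α) (i : S) : Finite (palette π c i) :=
  Finite.Set.finite_image _ _

lemma mem_palette (π : R →+* S) (c : R → α) (s : R) : c s ∈ palette π c (π s) := ⟨s, rfl, rfl⟩

def RainbowFree (c : R → α) (a₁ a₂ a₃ b : R) : Prop :=
  ¬ ∃ s₁ s₂ s₃ : R, a₁ * s₁ + a₂ * s₂ + a₃ * s₃ = b ∧ c s₁ ≠ c s₂ ∧ c s₁ ≠ c s₃ ∧ c s₂ ≠ c s₃

lemma RainbowFree.eq_or_eq_or_eq {c : R → α} {a₁ a₂ a₃ b s₁ s₂ s₃ : R}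
    (hc : RainbowFree c a₁ a₂ a₃ b) (h : a₁ * s₁ + a₂ * s₂ + a₃ * s₃ = b) :
    c s₁ = c s₂ ∨ c s₁ = c s₃ ∨ c s₂ = c s₃ := by
  by_contra! hne
  exact hc ⟨s₁, s₂, s₃, h, hne⟩

variable (π : R →+* S)

lemma exists_map_eq_and_mul_add_eq {a : R} (ha : IsUnit a) (r b : R) {j : S}
    (hj : π a * j + π r = π b) : ∃ s, π s = j ∧ a * s + r = b := by
  refine ⟨↑ha.unit⁻¹ * (b - r), (ha.map π).mul_left_cancel ?_, ?_⟩
  · rw [map_mul, ← mul_assoc, ← map_mul, IsUnit.mul_val_inv, map_one, one_mul, map_sub]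
    linear_combination -hj
  · rw [← mul_assoc, IsUnit.mul_val_inv, one_mul, sub_add_cancel]

variable {a₁ a₂ a₃ b : R} {i j k : S} (hjik : π a₁ * j + π a₂ * i + π a₃ * k = π b)
include hjik

lemma exists_solution_fst (h₁ : IsUnit a₁) {s₂ s₃ : R} (h₂ : π s₂ = i) (h₃ : π s₃ = k) :
    ∃ s₁, π s₁ = j ∧ a₁ * s₁ + a₂ * s₂ + a₃ * s₃ = b := by
  obtain ⟨s₁, hs₁, h⟩ := exists_map_eq_and_mul_add_eq π h₁ (a₂ * s₂ + a₃ * s₃) b (j := j)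
    (by rw [map_add, map_mul, map_mul, h₂, h₃]; linear_combination hjik)
  exact ⟨s₁, hs₁, by linear_combination h⟩

lemma exists_solution_snd (h₂ : IsUnit a₂) {s₁ s₃ : R} (h₁ : π s₁ = j) (h₃ : π s₃ = k) :
    ∃ s₂, π s₂ = i ∧ a₁ * s₁ + a₂ * s₂ + a₃ * s₃ = b := by
  obtain ⟨s₂, hs₂, h⟩ := exists_map_eq_and_mul_add_eq π h₂ (a₁ * s₁ + a₃ * s₃) b (j := i)
    (by rw [map_add, map_mul, map_mul, h₁, h₃]; linear_combination hjik)
  exact ⟨s₂, hs₂, by linear_combination h⟩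

lemma exists_solution_thd (h₃ : IsUnit a₃) {s₁ s₂ : R} (h₁ : π s₁ = j) (h₂ : π s₂ = i) :
    ∃ s₃, π s₃ = k ∧ a₁ * s₁ + a₂ * s₂ + a₃ * s₃ = b := by
  obtain ⟨s₃, hs₃, h⟩ := exists_map_eq_and_mul_add_eq π h₃ (a₁ * s₁ + a₂ * s₂) b (j := k)
    (by rw [map_add, map_mul, map_mul, h₁, h₂]; linear_combination hjik)
  exact ⟨s₃, hs₃, by linear_combination h⟩

variable {c : R → α} (hc : RainbowFree c a₁ a₂ a₃ b)
include hc

lemma palette_subset_of_pair_mem_diff (h₃ : IsUnit a₃) {x y : α} (hxy : x ≠ y)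
    (hx : x ∈ palette π c i \ palette π c k) (hy : y ∈ palette π c i \ palette π c k) :
    palette π c j ⊆ palette π c k := by
  rintro _ ⟨s₁, hs₁ : π s₁ = j, rfl⟩
  have eq_or_mem : ∀ z ∈ palette π c i \ palette π c k, c s₁ = z ∨ c s₁ ∈ palette π c k := by
    rintro _ ⟨⟨s₂, hs₂ : π s₂ = i, rfl⟩, hz⟩
    obtain ⟨s₃, hs₃, h⟩ := exists_solution_thd π hjik h₃ hs₁ hs₂
    have hk := hs₃ ▸ mem_palette π c s₃
    rcases hc.eq_or_eq_or_eq h with h | h | h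
    · exact .inl h
    · exact .inr (h ▸ hk)
    · exact absurd (h ▸ hk) hz
  obtain hx | hx := eq_or_mem x hx
  · obtain hy | hy := eq_or_mem y hy
    · exact absurd (hx.symm.trans hy) hxy
    · exact hy
  · exact hx

lemma palette_subset_of_mem_diff (h₁ : IsUnit a₁) {x : α}
    (hx : x ∈ palette π c i \ palette π c k) (hjk : palette π c j ⊆ palette π c k) :
    palette π c k ⊆ palette π c j := by
  obtain ⟨⟨s₂, hs₂ : π s₂ = i, rfl⟩, hx⟩ := hx
  rintro _ ⟨s₃, hs₃ : π s₃ = k, rfl⟩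
  obtain ⟨s₁, hs₁, h⟩ := exists_solution_fst π hjik h₁ hs₂ hs₃
  have hj := hs₁ ▸ mem_palette π c s₁
  rcases hc.eq_or_eq_or_eq h with h | h | h
  · exact absurd (h ▸ hjk hj) hx
  · exact h ▸ hj
  · exact absurd (h ▸ hs₃ ▸ mem_palette π c s₃) hx

lemma mem_palette_or_mem_palette (h₂ : IsUnit a₂) {w w' : α} (hw : w ∈ palette π c j)
    (hw' : w' ∈ palette π c k) (hne : w ≠ w') : w ∈ palette π c i ∨ w' ∈ palette π c i := by
  obtain ⟨s₁, hs₁ : π s₁ = j, rfl⟩ := hw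
  obtain ⟨s₃, hs₃ : π s₃ = k, rfl⟩ := hw'
  obtain ⟨s₂, hs₂, h⟩ := exists_solution_snd π hjik h₂ hs₁ hs₃
  have hi := hs₂ ▸ mem_palette π c s₂
  rcases hc.eq_or_eq_or_eq h with h | h | h
  · exact .inl (h ▸ hi)
  · exact absurd h hne
  · exact .inr (h ▸ hi)

end Palette

theorem RainbowFree.ncard_palette_lt_of_one_lt_ncard_diff {R S α : Type*} [CommRing R]
    [CommRing S] [Finite R] {π : R →+* S} {c : R → α} {a₁ a₂ a₃ b : R}
    (hc : RainbowFree c a₁ a₂ a₃ b) (h₁ : IsUnit a₁) (h₂ : IsUnit a₂) (h₃ : IsUnit a₃)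
    {i k : S} (h : 1 < (palette π c i \ palette π c k).ncard) :
    (palette π c k).ncard < (palette π c i).ncard := by
  obtain ⟨x, y, hx, hy, hxy⟩ := (Set.one_lt_ncard_iff).mp h
  set j := ↑(h₁.map π).unit⁻¹ * (π b - π a₂ * i - π a₃ * k)
  have hjik : π a₁ * j + π a₂ * i + π a₃ * k = π b := by
    rw [← mul_assoc, IsUnit.mul_val_inv, one_mul]; ring
  have hjk := palette_subset_of_pair_mem_diff π hjik hc h₃ hxy hx hy
  have hkj := palette_subset_of_mem_diff π hjik hc h₁ hx hjk
  have hki : (palette π c k \ palette π c i).ncard ≤ 1 :=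
    (Set.ncard_le_one).mpr fun w hw w' hw' => by_contra fun hne =>
      (mem_palette_or_mem_palette π hjik hc h₂ (hkj hw.1) hw'.1 hne).elim hw.2 hw'.2
  exact (Set.ncard_lt_ncard_iff_ncard_sdiff_lt_ncard_sdiff).mpr (hki.trans_lt h)

theorem stmt_13 (u t : ℕ) (hu : 0 < u) (ht : 0 < t) (a₁ a₂ a₃ b : ℤ)
    (ha : IsUnit ((a₁ * a₂ * a₃ : ℤ) : ZMod (u * t)))
    (Color : Type) (c : ZMod (u * t) → Color)
    (hrf : ¬ ∃ s₁ s₂ s₃ : ZMod (u * t),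
      (a₁ : ZMod (u * t)) * s₁ + a₂ * s₂ + a₃ * s₃ = b ∧
      c s₁ ≠ c s₂ ∧ c s₁ ≠ c s₃ ∧ c s₂ ≠ c s₃)
    (P : ZMod u → Set Color)
    (hP : ∀ i, P i = c '' {z | ZMod.castHom (dvd_mul_right u t) (ZMod u) z = i})
    (hmax : ∀ i, (P i).ncard ≤ (P 0).ncard) :
    ∀ i, (P i \ P 0).ncard ≤ 1 := by
  have : NeZero (u * t) := ⟨by positivity⟩
  obtain rfl : P = palette (ZMod.castHom (dvd_mul_right u t) (ZMod u)) c := funext hP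
  rw [Int.cast_mul, Int.cast_mul, IsUnit.mul_iff, IsUnit.mul_iff] at ha
  obtain ⟨⟨h₁, h₂⟩, h₃⟩ := ha
  intro i
  by_contra! h
  exact (hmax i).not_gt (RainbowFree.ncard_palette_lt_of_one_lt_ncard_diff hrf h₁ h₂ h₃ h)
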